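/- Let g ≥ 1 and let v ∈ ℤ^{2g} be a primitive vector (the gcd of its coordinates is 1). Then the symplectic transvection T_v : x ↦ x + ω(x,v)·v lies in Sp(2g,ℤ), and T_v is a product of two elements of finite order in Sp(2g,ℤ). -/

import Mathlib

open Matrix

/-- The matrix of the symplectic transvection `T_v : x ↦ x + ω(x, v) • v` on `ℤ^{2g}`,
where `ω(x, y) = xᵀ J y` is the standard symplectic form (with `J` the standard
skew-symmetric matrix): acting on column vectors, `(T_v x) i = x i + (x ⬝ᵥ (J *ᵥ v)) * v i`. -/
def symplecticTransvection (g : ℕ) (v : Fin g ⊕ Fin g → ℤ) :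
    Matrix (Fin g ⊕ Fin g) (Fin g ⊕ Fin g) ℤ :=
  1 + Matrix.vecMulVec v (Matrix.J (Fin g) ℤ *ᵥ v)

/-!
A primitive vector `v` has a partner `w` with `ω(v, w) = -1` (Bézout), so `v, w` span a
symplectic plane. The matrix `1 + E (M - 1) F`, with `E` the inclusion of that plane and `F` its
symplectic adjoint, extends `M ∈ Sp(2)` by the identity on the symplectic complement; this is a
homomorphism `Sp(2) → Sp(2g)` sending the standard transvection `[[1, 1], [0, 1]]` to `T_v`.
In `Sp(2)` that transvection is `(T J⁻¹) J`, where `J` has order 4 and `T J⁻¹` has order 3.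
-/

namespace Matrix

theorem transpose_mul_mul_apply {n k α : Type*} [Fintype n] [NonUnitalSemiring α]
    (E : Matrix n k α) (A : Matrix n n α) (p q : k) :
    (Eᵀ * A * E) p q = (fun i => E i p) ⬝ᵥ (A *ᵥ fun i => E i q) := by
  rw [Matrix.mul_assoc, mul_apply']
  rfl

section ExtendAlong

variable {k n R : Type*} [Fintype k] [DecidableEq k] [DecidableEq n] [Ring R]

/-- For `F * E = 1`, this is `M` on the image of `E` and the identity on the kernel of `F`. -/
def extendAlong (E : Matrix n k R) (F : Matrix k n R) (M : Matrix k k R) : Matrix n n R :=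
  1 + E * (M - 1) * F

variable {E : Matrix n k R} {F : Matrix k n R}

theorem extendAlong_one : extendAlong E F 1 = 1 := by
  simp [extendAlong]

theorem extendAlong_mul [Fintype n] (h : F * E = 1) (M N : Matrix k k R) :
    extendAlong E F (M * N) = extendAlong E F M * extendAlong E F N := by
  have hMN : M * N - 1 = (M - 1) + (N - 1) + (M - 1) * (N - 1) := by noncomm_ring
  have hFE : E * (M - 1) * F * (E * (N - 1) * F) = E * ((M - 1) * (N - 1)) * F := by
    simp only [Matrix.mul_assoc, ← Matrix.mul_assoc F, h, Matrix.one_mul]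
  simp only [extendAlong, hMN, Matrix.mul_add, Matrix.add_mul, Matrix.one_mul, Matrix.mul_one, hFE]
  abel

theorem extendAlong_one_add_vecMulVec (a b : k → R) :
    extendAlong E F (1 + vecMulVec a b) = 1 + vecMulVec (E *ᵥ a) (b ᵥ* F) := by
  rw [extendAlong, add_sub_cancel_left, mul_vecMulVec, vecMulVec_mul]

end ExtendAlong

variable {l m R : Type*} [Fintype l] [DecidableEq l] [Fintype m] [DecidableEq m] [CommRing R]

section J

theorem J_pow_four : J l R ^ 4 = 1 := by
  rw [show 4 = 2 * 2 from rfl, pow_mul, sq (J l R), J_squared, neg_one_sq]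

theorem isOfFinOrder_symJ : IsOfFinOrder (SymplecticGroup.symJ l R) :=
  isOfFinOrder_iff_pow_eq_one.mpr ⟨4, by norm_num, Subtype.ext J_pow_four⟩

theorem vecMul_J (u : l ⊕ l → R) : u ᵥ* J l R = -(J l R *ᵥ u) := by
  rw [← mulVec_transpose, J_transpose, neg_mulVec]

theorem dotProduct_J_mulVec_self (u : l ⊕ l → R) : u ⬝ᵥ (J l R *ᵥ u) = 0 := by
  simp [J, fromBlocks_mulVec, neg_mulVec, dotProduct, Fintype.sum_sum_type, mul_comm]

theorem one_add_vecMulVec_J_mem_symplecticGroup (u : l ⊕ l → R) :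
    1 + vecMulVec u (J l R *ᵥ u) ∈ symplecticGroup l R := by
  rw [SymplecticGroup.mem_iff', transpose_add, transpose_one, transpose_vecMulVec, Matrix.add_mul,
    Matrix.one_mul, vecMulVec_mul, vecMul_J, vecMulVec_neg, Matrix.add_mul, Matrix.mul_add,
    Matrix.mul_add, Matrix.mul_one, Matrix.mul_one, mul_vecMulVec, Matrix.neg_mul,
    vecMulVec_mul_vecMulVec, dotProduct_comm, dotProduct_J_mulVec_self, zero_smul, vecMulVec_zero,
    neg_zero, add_zero, add_neg_cancel_right]

end J

section SymplecticAdjoint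

/-- The adjoint of `E` for the standard symplectic forms: `ω(F x, y) = ω(x, E y)`. -/
def symplecticAdjoint (E : Matrix (l ⊕ l) (m ⊕ m) R) : Matrix (m ⊕ m) (l ⊕ l) R :=
  -(J m R * Eᵀ * J l R)

variable {E : Matrix (l ⊕ l) (m ⊕ m) R}

theorem J_mul_symplecticAdjoint (E : Matrix (l ⊕ l) (m ⊕ m) R) :
    J m R * symplecticAdjoint E = Eᵀ * J l R := by
  rw [symplecticAdjoint, Matrix.mul_neg, ← Matrix.mul_assoc, ← Matrix.mul_assoc, J_squared,
    Matrix.neg_mul, Matrix.neg_mul, Matrix.one_mul, neg_neg]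

theorem symplecticAdjoint_mul_self (hE : Eᵀ * J l R * E = J m R) :
    symplecticAdjoint E * E = 1 := by
  rw [symplecticAdjoint, Matrix.neg_mul, Matrix.mul_assoc, Matrix.mul_assoc,
    ← Matrix.mul_assoc Eᵀ, hE, J_squared, neg_neg]

theorem J_mulVec_vecMul_symplecticAdjoint (E : Matrix (l ⊕ l) (m ⊕ m) R) (u : m ⊕ m → R) :
    (J m R *ᵥ u) ᵥ* symplecticAdjoint E = J l R *ᵥ (E *ᵥ u) := by
  rw [← vecMul_transpose, J_transpose, vecMul_vecMul, Matrix.neg_mul, J_mul_symplecticAdjoint,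
    vecMul_neg, ← vecMul_vecMul, vecMul_transpose, vecMul_J, neg_neg]

theorem extendAlong_symplecticAdjoint_one_add_vecMulVec_J (u : m ⊕ m → R) :
    extendAlong E (symplecticAdjoint E) (1 + vecMulVec u (J m R *ᵥ u)) =
      1 + vecMulVec (E *ᵥ u) (J l R *ᵥ (E *ᵥ u)) := by
  rw [extendAlong_one_add_vecMulVec, J_mulVec_vecMul_symplecticAdjoint]

theorem extendAlong_symplecticAdjoint_mem_symplecticGroup (hE : Eᵀ * J l R * E = J m R)
    {M : Matrix (m ⊕ m) (m ⊕ m) R} (hM : M ∈ symplecticGroup m R) :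
    extendAlong E (symplecticAdjoint E) M ∈ symplecticGroup l R := by
  have hFE := symplecticAdjoint_mul_self hE
  have hEJ := (J_mul_symplecticAdjoint E).symm
  have hX : (M - 1)ᵀ * J m R + J m R * (M - 1) + (M - 1)ᵀ * J m R * (M - 1) = 0 := by
    rw [SymplecticGroup.mem_iff'] at hM
    rw [transpose_sub, transpose_one, ← sub_eq_zero.mpr hM]
    noncomm_ring
  rw [SymplecticGroup.mem_iff', extendAlong]
  generalize symplecticAdjoint E = F at hFE hEJ ⊢
  generalize M - 1 = X at hX ⊢
  have hJE : J l R * E = Fᵀ * J m R := by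
    simpa [J_transpose] using congrArg transpose hEJ
  have hJE' (Y : Matrix (m ⊕ m) (l ⊕ l) R) : J l R * (E * Y) = Fᵀ * (J m R * Y) := by
    rw [← Matrix.mul_assoc, hJE, Matrix.mul_assoc]
  have hFE' (Y : Matrix (m ⊕ m) (l ⊕ l) R) : F * (E * Y) = Y := by
    rw [← Matrix.mul_assoc, hFE, Matrix.one_mul]
  calc (1 + E * X * F)ᵀ * J l R * (1 + E * X * F)
      = J l R + Fᵀ * (Xᵀ * J m R + J m R * X + Xᵀ * J m R * X) * F := by
        simp only [transpose_add, transpose_mul, transpose_one, Matrix.add_mul, Matrix.mul_add,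
          Matrix.one_mul, Matrix.mul_one, Matrix.mul_assoc, hEJ, hJE', hFE']
        abel
    _ = J l R := by rw [hX, Matrix.mul_zero, Matrix.zero_mul, add_zero]

def extendAlongSymplecticHom (hE : Eᵀ * J l R * E = J m R) :
    symplecticGroup m R →* symplecticGroup l R where
  toFun M := ⟨extendAlong E (symplecticAdjoint E) M,
    extendAlong_symplecticAdjoint_mem_symplecticGroup hE M.2⟩
  map_one' := Subtype.ext extendAlong_one
  map_mul' M N := Subtype.ext (extendAlong_mul (symplecticAdjoint_mul_self hE) M N)

end SymplecticAdjoint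

local notation "e₁" => (Pi.single (Sum.inl 0) 1 : Fin 1 ⊕ Fin 1 → R)

theorem exists_symplectic_embedding_of_dotProduct_eq_one {v c : l ⊕ l → R}
    (h : v ⬝ᵥ c = 1) :
    ∃ E : Matrix (l ⊕ l) (Fin 1 ⊕ Fin 1) R,
      Eᵀ * J l R * E = J (Fin 1) R ∧ E *ᵥ e₁ = v := by
  have hJJ : J l R *ᵥ (J l R *ᵥ c) = -c := by
    rw [mulVec_mulVec, J_squared, neg_mulVec, one_mulVec]
  have hvw : v ⬝ᵥ (J l R *ᵥ (J l R *ᵥ c)) = -1 := by rw [hJJ, dotProduct_neg, h]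
  have hwv : (J l R *ᵥ c) ⬝ᵥ (J l R *ᵥ v) = 1 := by
    rw [dotProduct_mulVec, vecMul_J, hJJ, neg_neg, dotProduct_comm, h]
  refine ⟨of fun i => Sum.elim (fun _ => v i) (fun _ => (J l R *ᵥ c) i), ?_, ?_⟩
  · ext (i | i) (j | j) <;>
      simp only [transpose_mul_mul_apply, of_apply, Sum.elim_inl, Sum.elim_inr, hvw, hwv,
        dotProduct_J_mulVec_self] <;>
      simp [J, Subsingleton.elim i j]
  · ext i
    simp [mulVec, dotProduct, Fintype.sum_sum_type, Pi.single_apply]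

theorem one_add_vecMulVec_J_single_mul_neg_J_pow_three :
    ((1 + vecMulVec e₁ (J (Fin 1) R *ᵥ e₁)) * -J (Fin 1) R) ^ 3 = 1 := by
  ext (i | i) (j | j) <;> fin_cases i <;> fin_cases j <;>
    simp [pow_succ, J, mul_apply, Fintype.sum_sum_type, vecMulVec_apply, fromBlocks, one_apply]

theorem exists_isOfFinOrder_mul_eq_one_add_vecMulVec_J_single :
    ∃ a b : symplecticGroup (Fin 1) R, IsOfFinOrder a ∧ IsOfFinOrder b ∧
      ((a * b : symplecticGroup (Fin 1) R) : Matrix _ _ R) =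
        1 + vecMulVec e₁ (J (Fin 1) R *ᵥ e₁) := by
  set T := 1 + vecMulVec e₁ (J (Fin 1) R *ᵥ e₁)
  have hT : T * -J (Fin 1) R ∈ symplecticGroup (Fin 1) R :=
    mul_mem (one_add_vecMulVec_J_mem_symplecticGroup _)
      (SymplecticGroup.neg_mem (SymplecticGroup.J_mem _ _))
  refine ⟨⟨_, hT⟩, SymplecticGroup.symJ _ _, ?_, isOfFinOrder_symJ, ?_⟩
  · exact isOfFinOrder_iff_pow_eq_one.mpr
      ⟨3, by norm_num, Subtype.ext one_add_vecMulVec_J_single_mul_neg_J_pow_three⟩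
  · change T * -J (Fin 1) R * J (Fin 1) R = T
    rw [Matrix.mul_assoc, Matrix.neg_mul, J_squared, neg_neg, Matrix.mul_one]

theorem exists_isOfFinOrder_mul_eq_one_add_vecMulVec_J {v c : l ⊕ l → R} (h : v ⬝ᵥ c = 1) :
    ∃ a b : symplecticGroup l R, IsOfFinOrder a ∧ IsOfFinOrder b ∧
      ((a * b : symplecticGroup l R) : Matrix _ _ R) = 1 + vecMulVec v (J l R *ᵥ v) := by
  obtain ⟨E, hE, hEv⟩ := exists_symplectic_embedding_of_dotProduct_eq_one h
  obtain ⟨a, b, ha, hb, hab⟩ := exists_isOfFinOrder_mul_eq_one_add_vecMulVec_J_single (R := R)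
  let φ := extendAlongSymplecticHom hE
  refine ⟨φ a, φ b, φ.isOfFinOrder ha, φ.isOfFinOrder hb, ?_⟩
  rw [← map_mul]
  change extendAlong E (symplecticAdjoint E) (a * b : symplecticGroup (Fin 1) R) = _
  rw [hab, extendAlong_symplecticAdjoint_one_add_vecMulVec_J, hEv]

end Matrix

theorem symplecticTransvection_eq_product_of_two_torsion_general (g : ℕ)
    (v : Fin g ⊕ Fin g → ℤ) (hv : Finset.univ.gcd v = 1) :
    ∃ hmem : symplecticTransvection g v ∈ Matrix.symplecticGroup (Fin g) ℤ,
      ∃ a b : Matrix.symplecticGroup (Fin g) ℤ,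
        IsOfFinOrder a ∧ IsOfFinOrder b ∧
        (⟨symplecticTransvection g v, hmem⟩ : Matrix.symplecticGroup (Fin g) ℤ) = a * b := by
  obtain ⟨c, hc⟩ := Finset.univ.gcd_eq_sum_mul v
  have hvc : v ⬝ᵥ c = 1 := by rw [dotProduct, ← hc, hv]
  obtain ⟨a, b, ha, hb, hab⟩ := exists_isOfFinOrder_mul_eq_one_add_vecMulVec_J hvc
  have hT : symplecticTransvection g v = ↑(a * b) := hab.symm
  exact ⟨hT ▸ (a * b).2, a, b, ha, hb, Subtype.ext hT⟩

/-- For `g ≥ 1` and a primitive vector `v ∈ ℤ^{2g}` (the gcd of its coordinates is 1),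
the symplectic transvection `T_v` lies in `Sp(2g, ℤ)` and is a product of two elements
of finite order in `Sp(2g, ℤ)`. -/
theorem symplecticTransvection_eq_product_of_two_torsion (g : ℕ) (hg : 1 ≤ g)
    (v : Fin g ⊕ Fin g → ℤ) (hv : Finset.univ.gcd v = 1) :
    ∃ hmem : symplecticTransvection g v ∈ Matrix.symplecticGroup (Fin g) ℤ,
      ∃ a b : Matrix.symplecticGroup (Fin g) ℤ,
        IsOfFinOrder a ∧ IsOfFinOrder b ∧
        (⟨symplecticTransvection g v, hmem⟩ : Matrix.symplecticGroup (Fin g) ℤ) = a * b :=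
  symplecticTransvection_eq_product_of_two_torsion_general g v hv
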